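/- Let N ∈ ℕ and for n ∈ ℝ, i ∈ {0,…,N} let a_{n,i} ∈ ℂ with only countably many nonzero. Suppose the iterated series ∑_{n∈ℝ} ( ∑_{i=0}^{N} a_{n,i} e^{nz'} (z')^i ) converges absolutely (in the outer sum over n) for all z' in an open disk U centered at 0, and that the same holds for all the term-by-term derivatives in z'. Then for each fixed i ∈ {0,…,N}, the series ∑_{n∈ℝ} a_{n,i} e^{nz'} converges absolutely for z' ∈ U, and consequently the double series ∑_{n,i} a_{n,i} e^{nz'} (z')^i converges absolutely on U. -/

import Mathlib

/-! On a vertical line `re w = re z'` every `‖exp (n * w)‖` with `n` real equals `‖exp (n * z')‖`.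
Choosing `N + 1` distinct points `w m` of the disk on the vertical line through `z'`, the vector
`(a n i * exp (n * z'))ᵢ` is mapped by the Vandermonde matrix of the `w m` to a vector whose entries
have the same norms as the summable terms `∑ i, a n i * exp (n * w m) * w m ^ i`. Inverting
the Vandermonde matrix writes each `a n i * exp (n * z')` as a fixed linear combination of those,
which gives absolute convergence; the double series then has finitely many fibres. -/

open Complex Metric Matrix

theorem summable_norm_mulVec_apply {ι α 𝕜 : Type*} [NormedField 𝕜] [Fintype ι]
    (B : Matrix ι ι 𝕜) {v : α → ι → 𝕜} (hv : ∀ m, Summable fun x => ‖v x m‖) (i : ι) :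
    Summable fun x => ‖(B *ᵥ v x) i‖ := by
  refine .of_nonneg_of_le (fun _ => norm_nonneg _) (fun x => ?_)
    (summable_sum (s := Finset.univ) fun m _ => (hv m).mul_left ‖B i m‖)
  calc ‖(B *ᵥ v x) i‖ ≤ ∑ m, ‖B i m * v x m‖ := norm_sum_le _ _
    _ = ∑ m, ‖B i m‖ * ‖v x m‖ := by simp only [norm_mul]

theorem summable_norm_of_summable_norm_mulVec {ι α 𝕜 : Type*} [NormedField 𝕜] [Fintype ι]
    [DecidableEq ι] {A : Matrix ι ι 𝕜} (hA : IsUnit A.det) {v : α → ι → 𝕜}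
    (h : ∀ m, Summable fun x => ‖(A *ᵥ v x) m‖) (i : ι) :
    Summable fun x => ‖v x i‖ := by
  simpa only [mulVec_mulVec, nonsing_inv_mul A hA, one_mulVec] using
    summable_norm_mulVec_apply A⁻¹ h i

theorem IsOpen.exists_injective_fin_re_eq {U : Set ℂ} (hU : IsOpen U) {z : ℂ} (hz : z ∈ U)
    (k : ℕ) : ∃ w : Fin k → ℂ, Function.Injective w ∧ ∀ m, w m ∈ U ∧ (w m).re = z.re := by
  set T : Set ℝ := {t | z + t * I ∈ U}
  have hT : T ∈ nhds (0 : ℝ) :=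
    (hU.preimage (by fun_prop)).mem_nhds (by simpa [T] using hz)
  have : Infinite T := (infinite_of_mem_nhds 0 hT).to_subtype
  let e : Fin k ↪ T := Fin.valEmbedding.trans (Infinite.natEmbedding T)
  refine ⟨fun m => z + (e m : ℝ) * I, fun m₁ m₂ h => e.injective (Subtype.ext ?_),
    fun m => ⟨(e m).2, by simp⟩⟩
  simpa using congrArg Complex.im h

theorem norm_exp_ofReal_mul_eq_of_re_eq (x : ℝ) {z w : ℂ} (h : z.re = w.re) :
    ‖exp (x * z)‖ = ‖exp (x * w)‖ := by
  simp [Complex.norm_exp, h]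

theorem summable_prod_of_finite_right {α β : Type*} [Finite β] {f : α × β → ℝ} (hf : 0 ≤ f)
    (h : ∀ b, Summable fun a => f (a, b)) : Summable f := by
  rw [← (Equiv.prodComm β α).summable_iff]
  exact (summable_prod_of_nonneg (f := f ∘ Equiv.prodComm β α) fun _ => hf _).2
    ⟨h, .of_finite⟩

theorem stmt_3_general (N : ℕ) (a : ℝ → Fin (N + 1) → ℂ)
    (R : ℝ)
    (hiter : ∀ k : ℕ, ∀ z' ∈ ball (0 : ℂ) R,
      Summable fun n : ℝ =>
        ‖iteratedDeriv k (fun w : ℂ => ∑ i : Fin (N + 1),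
            a n i * Complex.exp ((n : ℂ) * w) * w ^ (i : ℕ)) z'‖) :
    (∀ i : Fin (N + 1), ∀ z' ∈ ball (0 : ℂ) R,
        Summable fun n : ℝ => ‖a n i * Complex.exp ((n : ℂ) * z')‖) ∧
    ∀ z' ∈ ball (0 : ℂ) R,
      Summable fun p : ℝ × Fin (N + 1) =>
        ‖a p.1 p.2 * Complex.exp ((p.1 : ℂ) * z') * z' ^ (p.2 : ℕ)‖ := by
  have hcoeff : ∀ i : Fin (N + 1), ∀ z' ∈ ball (0 : ℂ) R,
      Summable fun n : ℝ => ‖a n i * Complex.exp ((n : ℂ) * z')‖ := by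
    intro i z' hz'
    obtain ⟨w, hw, hwU⟩ := isOpen_ball.exists_injective_fin_re_eq hz' (N + 1)
    refine summable_norm_of_summable_norm_mulVec (det_vandermonde_ne_zero_iff.2 hw).isUnit
      (v := fun n j => a n j * exp (n * z')) (fun m => (hiter 0 (w m) (hwU m).1).congr fun n => ?_) i
    have hexp := norm_exp_ofReal_mul_eq_of_re_eq n (hwU m).2
    simp only [iteratedDeriv_zero, mulVec, dotProduct, vandermonde_apply]
    calc _ = ‖exp (n * w m)‖ * ‖∑ j, a n j * w m ^ (j : ℕ)‖ := by
          rw [← norm_mul, Finset.mul_sum]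
          exact congrArg _ (Finset.sum_congr rfl fun _ _ => by ring)
      _ = _ := by
          rw [hexp, ← norm_mul, Finset.mul_sum]
          exact congrArg _ (Finset.sum_congr rfl fun _ _ => by ring)
  refine ⟨hcoeff, fun z' hz' => summable_prod_of_finite_right (fun _ => norm_nonneg _) fun i => ?_⟩
  simpa only [norm_mul] using (hcoeff i z' hz').mul_right ‖z' ^ (i : ℕ)‖

/-- if the iterated series ∑_{n∈ℝ}(∑_{i=0}^{N} a_{n,i} e^{nz'} z'^i)
converges absolutely (in the outer sum) on an open disk around 0, together with
all term-by-term derivatives in z', then each pure-exponential coefficient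
series ∑_n a_{n,i} e^{nz'} converges absolutely on the disk, and hence so does
the associated double series. -/
theorem stmt_3 (N : ℕ) (a : ℝ → Fin (N + 1) → ℂ)
    (hcount : {n : ℝ | ∃ i, a n i ≠ 0}.Countable)
    (R : ℝ) (hR : 0 < R)
    (hiter : ∀ k : ℕ, ∀ z' ∈ ball (0 : ℂ) R,
      Summable fun n : ℝ =>
        ‖iteratedDeriv k (fun w : ℂ => ∑ i : Fin (N + 1),
            a n i * Complex.exp ((n : ℂ) * w) * w ^ (i : ℕ)) z'‖) :
    (∀ i : Fin (N + 1), ∀ z' ∈ ball (0 : ℂ) R,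
        Summable fun n : ℝ => ‖a n i * Complex.exp ((n : ℂ) * z')‖) ∧
    ∀ z' ∈ ball (0 : ℂ) R,
      Summable fun p : ℝ × Fin (N + 1) =>
        ‖a p.1 p.2 * Complex.exp ((p.1 : ℂ) * z') * z' ^ (p.2 : ℕ)‖ :=
  stmt_3_general N a R hiter
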